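/- arXiv:math/0110227 — 5 statements merged into one kernel-verified Lean document; each statement's English description precedes it below -/
import Mathlib

section
/- Let θ and θ' be positive irrational real numbers and suppose that the ℤ-submodules of ℝ satisfy ℤ + ℤθ' = μ·(ℤ + ℤθ) for some real μ > 0. Then the regular continued fraction expansions of θ and θ' coincide except for finitely many terms: there exist natural numbers k and l such that for every i ≥ 0 the (k+i)-th partial denominator of the continued fraction of θ equals the (l+i)-th partial denominator of the continued fraction of θ'. -/
/-!
Expressing the basis `(1, θ')` of `ℤ + ℤθ' = μ(ℤ + ℤθ)` in the basis `(μ, μθ)` gives an integer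
matrix of determinant `±1` with `θ' = (aθ + b)/(cθ + d)`. Euclid's algorithm on `c` writes this
Möbius map as a composite of the maps `x ↦ n + x`, `x ↦ -x` and `x ↦ x⁻¹`, and none of these
changes more than finitely many leading terms of the continued fraction of an irrational number:
`x` and `n + x` have the same image under the Gauss map, `x ↦ x⁻¹` is one Gauss step in one
direction or the other, and if `0 < g = fract x < 1/2` then `fract (-x) = 1 - g` while the Gauss
map sends `(1 - g)⁻¹` to `g⁻¹ - 1`.
-/

open Pointwise

/-- The terms (partial denominators) of the regular continued fraction expansion of a
real number: `cfTerm θ 0 = ⌊θ⌋`, and `cfTerm θ (n+1)` is the `n`-th term of the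
expansion of `1/(θ - ⌊θ⌋)`. -/
noncomputable def cfTerm : ℝ → ℕ → ℤ
  | θ, 0 => ⌊θ⌋
  | θ, n + 1 => cfTerm (Int.fract θ)⁻¹ n

noncomputable def cfShift (x : ℝ) : ℝ := (Int.fract x)⁻¹

def CFTailEquiv (x y : ℝ) : Prop := ∃ k l : ℕ, cfShift^[k] x = cfShift^[l] y

lemma cfTerm_add_eq_cfTerm_iterate (k : ℕ) (θ : ℝ) (i : ℕ) :
    cfTerm θ (k + i) = cfTerm (cfShift^[k] θ) i := by
  induction k generalizing θ with
  | zero => simp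
  | succ k ih =>
    rw [Nat.add_right_comm, Function.iterate_succ_apply, ← ih]
    rfl

namespace CFTailEquiv

lemma exists_cfTerm_eq {x y : ℝ} (h : CFTailEquiv x y) :
    ∃ k l : ℕ, ∀ i : ℕ, cfTerm x (k + i) = cfTerm y (l + i) := by
  obtain ⟨k, l, hkl⟩ := h
  exact ⟨k, l, fun i => by rw [cfTerm_add_eq_cfTerm_iterate, cfTerm_add_eq_cfTerm_iterate, hkl]⟩

lemma symm {x y : ℝ} (h : CFTailEquiv x y) : CFTailEquiv y x :=
  let ⟨k, l, h⟩ := h; ⟨l, k, h.symm⟩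

lemma trans {x y z : ℝ} (hxy : CFTailEquiv x y) (hyz : CFTailEquiv y z) : CFTailEquiv x z := by
  obtain ⟨k, l, hxy⟩ := hxy
  obtain ⟨m, n, hyz⟩ := hyz
  refine ⟨m + k, l + n, ?_⟩
  rw [Function.iterate_add_apply, hxy, ← Function.iterate_add_apply, Nat.add_comm,
    Function.iterate_add_apply, hyz, ← Function.iterate_add_apply]

end CFTailEquiv

lemma cfTailEquiv_cfShift (x : ℝ) : CFTailEquiv x (cfShift x) := ⟨1, 0, rfl⟩

lemma cfTailEquiv_intCast_add (n : ℤ) (x : ℝ) : CFTailEquiv x (n + x) :=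
  ⟨1, 1, by simp [cfShift, Int.fract_intCast_add]⟩

lemma cfShift_inv_one_sub {g : ℝ} (hg0 : 0 < g) (hg : g < 1 / 2) :
    cfShift (1 - g)⁻¹ = g⁻¹ - 1 := by
  have hfloor : ⌊(1 - g)⁻¹⌋ = 1 := by
    rw [Int.floor_eq_iff, Int.cast_one, le_inv_comm₀ one_pos (by linarith),
      inv_lt_comm₀ (by linarith) (by norm_num)]
    constructor <;> linarith
  have hfract : (1 - g)⁻¹ - 1 = g / (1 - g) := by
    have : 1 - g ≠ 0 := by linarith
    field_simp
    ring
  rw [cfShift, ← Int.self_sub_floor, hfloor, Int.cast_one, hfract, inv_div]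
  field_simp

lemma cfTailEquiv_neg_of_fract_lt_half {x : ℝ} (h0 : 0 < Int.fract x)
    (h : Int.fract x < 1 / 2) : CFTailEquiv x (-x) := by
  have hshift : cfShift (-x) = (1 - Int.fract x)⁻¹ := by rw [cfShift, Int.fract_neg h0.ne']
  have hshift2 : cfShift (cfShift (-x)) = ((-1 : ℤ) : ℝ) + (Int.fract x)⁻¹ := by
    rw [hshift, cfShift_inv_one_sub h0 h, Int.cast_neg, Int.cast_one, neg_add_eq_sub]
  have hneg : CFTailEquiv (-x) (cfShift (cfShift (-x))) := ⟨2, 0, rfl⟩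
  rw [hshift2] at hneg
  exact ((cfTailEquiv_cfShift x).trans (cfTailEquiv_intCast_add _ _)).trans hneg.symm

lemma Irrational.fract {x : ℝ} (hx : Irrational x) : Irrational (Int.fract x) :=
  hx.sub_intCast ⌊x⌋

lemma cfTailEquiv_neg {x : ℝ} (hx : Irrational x) : CFTailEquiv x (-x) := by
  have h0 : 0 < Int.fract x := (Int.fract_nonneg x).lt_of_ne' hx.fract.ne_zero
  have hhalf : Int.fract x ≠ 1 / 2 := by
    simpa using hx.fract.ne_rat (1 / 2)
  rcases hhalf.lt_or_gt with h | h
  · exact cfTailEquiv_neg_of_fract_lt_half h0 h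
  · have hneg0 : 0 < Int.fract (-x) := by rw [Int.fract_neg h0.ne']; linarith [Int.fract_lt_one x]
    have hneg : Int.fract (-x) < 1 / 2 := by rw [Int.fract_neg h0.ne']; linarith
    simpa using (cfTailEquiv_neg_of_fract_lt_half hneg0 hneg).symm

lemma cfShift_eq_inv {x : ℝ} (h0 : 0 < x) (h1 : x < 1) : cfShift x = x⁻¹ := by
  rw [cfShift, Int.fract_eq_self.mpr ⟨h0.le, h1⟩]

lemma cfTailEquiv_inv_of_pos {x : ℝ} (hx : x ≠ 1) (h0 : 0 < x) : CFTailEquiv x x⁻¹ := by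
  rcases hx.lt_or_gt with h1 | h1
  · exact ⟨1, 0, cfShift_eq_inv h0 h1⟩
  · refine ⟨0, 1, ?_⟩
    rw [Function.iterate_one, cfShift_eq_inv (inv_pos.mpr h0) (inv_lt_one_of_one_lt₀ h1), inv_inv]
    rfl

lemma cfTailEquiv_inv {x : ℝ} (hx : Irrational x) : CFTailEquiv x x⁻¹ := by
  rcases hx.ne_zero.lt_or_gt with hneg | hpos
  · have h : CFTailEquiv (-x) (-x)⁻¹ := cfTailEquiv_inv_of_pos hx.neg.ne_one (neg_pos.mpr hneg)
    rw [inv_neg] at h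
    exact ((cfTailEquiv_neg hx).trans h).trans (cfTailEquiv_neg hx.inv).symm
  · exact cfTailEquiv_inv_of_pos hx.ne_one hpos

lemma irrational_and_cfTailEquiv_intCast_add_unit_mul {x : ℝ} (hx : Irrational x) (n : ℤ)
    {ε : ℤ} (hε : IsUnit ε) : Irrational (n + ε * x) ∧ CFTailEquiv x (n + ε * x) := by
  rcases Int.isUnit_iff.mp hε with rfl | rfl
  · rw [Int.cast_one, one_mul]
    exact ⟨hx.intCast_add n, cfTailEquiv_intCast_add n x⟩
  · rw [Int.cast_neg, Int.cast_one, neg_one_mul]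
    exact ⟨hx.neg.intCast_add n, (cfTailEquiv_neg hx).trans (cfTailEquiv_intCast_add n _)⟩

lemma irrational_and_cfTailEquiv_moebius {x : ℝ} (hx : Irrational x) (a b c d : ℤ)
    (hdet : IsUnit (a * d - b * c)) :
    Irrational ((a * x + b) / (c * x + d)) ∧ CFTailEquiv x ((a * x + b) / (c * x + d)) := by
  induction hn : c.natAbs using Nat.strong_induction_on generalizing a b c d with
  | _ n ih =>
    rcases eq_or_ne c 0 with rfl | hc
    · rw [mul_zero, sub_zero] at hdet
      obtain ⟨ha, hd⟩ := IsUnit.mul_iff.mp hdet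
      have hdd : (d : ℝ) * d = 1 := by exact_mod_cast Int.isUnit_mul_self hd
      have hd0 : ((0 : ℤ) : ℝ) * x + d ≠ 0 := by simpa using hd.ne_zero
      have hy : (a * x + b) / ((0 : ℤ) * x + d) = ((d * b : ℤ) : ℝ) + ((d * a : ℤ) : ℝ) * x := by
        rw [div_eq_iff hd0]
        push_cast
        linear_combination (-(a * x + b)) * hdd
      rw [hy]
      exact irrational_and_cfTailEquiv_intCast_add_unit_mul hx _ (hd.mul ha)
    · set q := a / c
      set r := a % c
      have ha : c * q + r = a := Int.mul_ediv_add_emod a c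
      have hr : r.natAbs < n := by
        have := Int.emod_nonneg a hc
        have := Int.emod_lt_abs a hc
        rw [Int.abs_eq_natAbs] at this
        omega
      have hdet' : IsUnit (c * (b - q * d) - d * r) := by
        convert hdet.neg using 1
        linear_combination (-d) * ha
      obtain ⟨hz, hxz⟩ := ih _ hr c d r (b - q * d) hdet' rfl
      have hden : (c : ℝ) * x + d ≠ 0 := ((hx.intCast_mul hc).add_intCast d).ne_zero
      have hy : (a * x + b) / (c * x + d)
          = q + ((c * x + d) / (r * x + ((b - q * d : ℤ) : ℝ)))⁻¹ := by
        have haR : (c : ℝ) * q + r = a := by exact_mod_cast ha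
        rw [inv_div, add_div' _ _ _ hden, div_left_inj' hden]
        push_cast
        linear_combination (-x) * haR
      rw [hy]
      exact ⟨hz.inv.intCast_add q,
        (hxz.trans (cfTailEquiv_inv hz)).trans (cfTailEquiv_intCast_add q _)⟩

lemma Irrational.eq_of_intCast_add_intCast_mul_eq {t : ℝ} (ht : Irrational t) {m n p : ℤ}
    (h : (m : ℝ) + n * t = p) : n = 0 ∧ m = p := by
  have hn : n = 0 := by
    by_contra hn
    exact ((ht.intCast_mul hn).intCast_add m).ne_int p h
  subst hn
  exact ⟨rfl, by simpa using h⟩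

lemma mem_span_one_pair_iff {θ x : ℝ} :
    x ∈ Submodule.span ℤ ({1, θ} : Set ℝ) ↔ ∃ a b : ℤ, (a : ℝ) + b * θ = x := by
  simp [Submodule.mem_span_pair, zsmul_eq_mul]

lemma mem_smul_span_one_pair_iff {μ θ x : ℝ} :
    x ∈ μ • Submodule.span ℤ ({1, θ} : Set ℝ) ↔ ∃ a b : ℤ, μ * (a + b * θ) = x := by
  simp [Submodule.mem_smul_pointwise_iff_exists, mem_span_one_pair_iff]

lemma exists_isUnit_det_eq_moebius_of_span_eq_smul {θ θ' μ : ℝ} (hθ' : Irrational θ')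
    (h : Submodule.span ℤ ({1, θ'} : Set ℝ) = μ • Submodule.span ℤ ({1, θ} : Set ℝ)) :
    ∃ a b c d : ℤ, IsUnit (a * d - b * c) ∧ θ' = (a * θ + b) / (c * θ + d) := by
  have h1mem : (1 : ℝ) ∈ Submodule.span ℤ ({1, θ'} : Set ℝ) := Submodule.subset_span (by simp)
  have hθ'mem : θ' ∈ Submodule.span ℤ ({1, θ'} : Set ℝ) := Submodule.subset_span (by simp)
  have hμmem : μ ∈ Submodule.span ℤ ({1, θ'} : Set ℝ) :=
    h ▸ mem_smul_span_one_pair_iff.mpr ⟨1, 0, by simp⟩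
  have hμθmem : μ * θ ∈ Submodule.span ℤ ({1, θ'} : Set ℝ) :=
    h ▸ mem_smul_span_one_pair_iff.mpr ⟨0, 1, by simp⟩
  obtain ⟨a, b, h1⟩ := mem_smul_span_one_pair_iff.mp (h ▸ h1mem)
  obtain ⟨c, d, h2⟩ := mem_smul_span_one_pair_iff.mp (h ▸ hθ'mem)
  obtain ⟨e, f, h3⟩ := mem_span_one_pair_iff.mp hμmem
  obtain ⟨g, k, h4⟩ := mem_span_one_pair_iff.mp hμθmem
  -- `[[a, b], [c, d]] * [[e, f], [g, k]] = 1`, read off by independence of `1` and `θ'`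
  have hrow1 : ((a * e + b * g : ℤ) : ℝ) + ((a * f + b * k : ℤ) : ℝ) * θ' = ((1 : ℤ) : ℝ) := by
    push_cast
    linear_combination (a : ℝ) * h3 + (b : ℝ) * h4 + h1
  have hrow2 : ((c * e + d * g : ℤ) : ℝ) + ((c * f + d * k - 1 : ℤ) : ℝ) * θ' = ((0 : ℤ) : ℝ) := by
    push_cast
    linear_combination (c : ℝ) * h3 + (d : ℝ) * h4 + h2
  obtain ⟨h12, h11⟩ := hθ'.eq_of_intCast_add_intCast_mul_eq hrow1
  obtain ⟨h22, -⟩ := hθ'.eq_of_intCast_add_intCast_mul_eq hrow2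
  have hdet : (d * a - c * b) * (e * k - f * g) = 1 := by
    linear_combination (c * f + d * k) * h11 - (c * e + d * g) * h12 + h22
  have hden : (b : ℝ) * θ + a ≠ 0 := by
    intro h0
    simp [add_comm (a : ℝ), h0] at h1
  refine ⟨d, c, b, a, IsUnit.of_mul_eq_one _ hdet, ?_⟩
  rw [eq_div_iff hden]
  linear_combination ((c : ℝ) + d * θ) * h1 - ((a : ℝ) + b * θ) * h2

theorem cf_tail_eq_of_proportional_modules_general (θ θ' : ℝ)
    (hθ : Irrational θ) (hθ' : Irrational θ')
    (mu : ℝ)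
    (hmod : Submodule.span ℤ ({1, θ'} : Set ℝ) = mu • Submodule.span ℤ ({1, θ} : Set ℝ)) :
    ∃ k l : ℕ, ∀ i : ℕ, cfTerm θ (k + i) = cfTerm θ' (l + i) := by
  obtain ⟨a, b, c, d, hdet, rfl⟩ := exists_isUnit_det_eq_moebius_of_span_eq_smul hθ' hmod
  exact (irrational_and_cfTailEquiv_moebius hθ a b c d hdet).2.exists_cfTerm_eq

/-- If `θ, θ'` are positive irrationals and `ℤ + ℤθ' = μ (ℤ + ℤθ)` for some
`μ > 0`, then the continued fraction expansions of `θ` and `θ'` coincide except for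
finitely many terms. -/
theorem cf_tail_eq_of_proportional_modules (θ θ' : ℝ)
    (hθpos : 0 < θ) (hθ'pos : 0 < θ')
    (hθ : Irrational θ) (hθ' : Irrational θ')
    (mu : ℝ) (hmu : 0 < mu)
    (hmod : Submodule.span ℤ ({1, θ'} : Set ℝ) = mu • Submodule.span ℤ ({1, θ} : Set ℝ)) :
    ∃ k l : ℕ, ∀ i : ℕ, cfTerm θ (k + i) = cfTerm θ' (l + i) :=
  cf_tail_eq_of_proportional_modules_general θ θ' hθ hθ' mu hmod
end

section
/- Let n ≥ 1 and let v : Fin n → ℝ be a family of real numbers that is linearly independent over ℚ. Let λ be a nonzero real number and suppose that the ℤ-submodule of ℝ generated by λv_1, …, λv_n equals the ℤ-submodule generated by v_1, …, v_n. Then there exists an n×n integer matrix A with determinant ±1 (A ∈ GL_n(ℤ)) such that Σ_j A_{ij} v_j = λ v_i for every i; i.e. v is an eigenvector of A with eigenvalue λ. -/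
/-!
A ℚ-linearly independent family is also ℤ-linearly independent, so integer coefficients with
respect to `v` are unique. Writing each `λ v_i` in terms of the `v_j` and each `v_i` in terms of the
`λ v_j` gives integer matrices `A` and `B`; uniqueness of coefficients forces `B * A = 1`, so
`det A` is a unit of `ℤ`.
-/

open Submodule Set

section CoefficientMatrix

variable {R M ι ι' : Type*} [Semiring R] [AddCommMonoid M] [Module R M] [Fintype ι]

theorem exists_matrix_sum_smul_eq_of_forall_mem_span_range {v : ι → M} {w : ι' → M}
    (h : ∀ i, w i ∈ span R (range v)) : ∃ A : Matrix ι' ι R, ∀ i, ∑ j, A i j • v j = w i :=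
  ⟨Matrix.of fun i => ((mem_span_range_iff_exists_fun R).mp (h i)).choose,
    fun i => ((mem_span_range_iff_exists_fun R).mp (h i)).choose_spec⟩

theorem Matrix.sum_mul_apply_smul {ι'' : Type*} [Fintype ι'] (B : Matrix ι'' ι' R)
    (A : Matrix ι' ι R) (v : ι → M) (i : ι'') :
    ∑ k, (B * A) i k • v k = ∑ j, B i j • ∑ k, A j k • v k := by
  simp only [Matrix.mul_apply, Finset.sum_smul, Finset.smul_sum, mul_smul]
  exact Finset.sum_comm

theorem LinearIndependent.matrix_eq_of_sum_smul_eq {v : ι → M} (hv : LinearIndependent R v)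
    {A B : Matrix ι' ι R} (h : ∀ i, ∑ j, A i j • v j = ∑ j, B i j • v j) : A = B :=
  Matrix.ext fun i => Fintype.linearIndependent_iffₛ.mp hv (A i) (B i) (h i)

end CoefficientMatrix

theorem LinearIndependent.exists_isUnit_det_of_span_range_eq {R M ι : Type*} [CommRing R]
    [AddCommMonoid M] [Module R M] [Fintype ι] [DecidableEq ι] {v w : ι → M}
    (hv : LinearIndependent R v) (h : span R (range w) = span R (range v)) :
    ∃ A : Matrix ι ι R, IsUnit A.det ∧ ∀ i, ∑ j, A i j • v j = w i := by
  obtain ⟨A, hA⟩ := exists_matrix_sum_smul_eq_of_forall_mem_span_range (R := R) (v := v)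
    fun i => h ▸ subset_span (mem_range_self i)
  obtain ⟨B, hB⟩ := exists_matrix_sum_smul_eq_of_forall_mem_span_range (R := R) (v := w)
    fun i => h.symm ▸ subset_span (mem_range_self i)
  have hBA : B * A = 1 := hv.matrix_eq_of_sum_smul_eq fun i => by
    simp only [Matrix.sum_mul_apply_smul, hA, hB, Matrix.one_apply, ite_smul, one_smul,
      zero_smul, Finset.sum_ite_eq, Finset.mem_univ, if_true]
  exact ⟨A, Matrix.isUnit_det_of_left_inverse hBA, hA⟩

theorem exists_glnz_eigen_general (n : ℕ) (v : Fin n → ℝ)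
    (hv : LinearIndependent ℚ v) (lam : ℝ)
    (hspan : Submodule.span ℤ (Set.range fun i => lam * v i)
      = Submodule.span ℤ (Set.range v)) :
    ∃ A : Matrix (Fin n) (Fin n) ℤ, IsUnit A.det ∧
      ∀ i, ∑ j, (A i j : ℝ) * v j = lam * v i := by
  obtain ⟨A, hdet, hA⟩ := (hv.restrict_scalars' ℤ).exists_isUnit_det_of_span_range_eq hspan
  exact ⟨A, hdet, fun i => by simpa only [zsmul_eq_mul] using hA i⟩

/-- If `v : Fin n → ℝ` is linearly independent over `ℚ`, `λ ≠ 0`, and the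
ℤ-submodule of ℝ generated by the `λ * v i` equals the one generated by the `v i`, then
there is a matrix `A ∈ GL_n(ℤ)` with `∑ j, A i j * v j = λ * v i` for all `i`. -/
theorem exists_glnz_eigen (n : ℕ) (hn : 1 ≤ n) (v : Fin n → ℝ)
    (hv : LinearIndependent ℚ v) (lam : ℝ) (hlam : lam ≠ 0)
    (hspan : Submodule.span ℤ (Set.range fun i => lam * v i)
      = Submodule.span ℤ (Set.range v)) :
    ∃ A : Matrix (Fin n) (Fin n) ℤ, IsUnit A.det ∧
      ∀ i, ∑ j, (A i j : ℝ) * v j = lam * v i :=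
  exists_glnz_eigen_general n v hv lam hspan
end

section
/- Let A ∈ SL(2,ℤ) be a matrix with trace strictly greater than 2 (a hyperbolic matrix with positive trace). Then there exists T ∈ SL(2,ℤ) such that all four entries of T·A·T⁻¹ are nonnegative integers. -/
/-!
Write `A = !![a, b; c, d]`; `c ≠ 0` since the trace exceeds `2`. Conjugating by a power of
`T = !![1, 1; 0, 1]` keeps `c` and the trace and moves `d` into `[1, |c|]`. If then `b c ≥ 0`,
the relation `a d - b c = 1` forces `a > 0`, and the matrix or its conjugate by
`S = !![0, -1; 1, 0]` is nonnegative. Otherwise `a ≤ 0`, so `|b c| = 1 - a d < c²` because the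
trace is at least `3`; conjugating by `S` replaces `c` by `-b`, and we conclude by descent on `|c|`.
-/

open Matrix Matrix.SpecialLinearGroup ModularGroup
open scoped MatrixGroups

def HasNonnegConj (A : SL(2, ℤ)) : Prop :=
  ∃ g : SL(2, ℤ), ∀ i j, 0 ≤ ((g * A * g⁻¹ : SL(2, ℤ)) : Matrix (Fin 2) (Fin 2) ℤ) i j

theorem HasNonnegConj.of_conj {A : SL(2, ℤ)} (g : SL(2, ℤ)) (h : HasNonnegConj (g * A * g⁻¹)) :
    HasNonnegConj A := by
  obtain ⟨g', hg'⟩ := h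
  exact ⟨g' * g, by simpa only [_root_.mul_inv_rev, mul_assoc] using hg'⟩

theorem Matrix.SpecialLinearGroup.trace_coe_conj {n R : Type*} [Fintype n] [DecidableEq n]
    [CommRing R] (g A : SpecialLinearGroup n R) :
    trace ((g * A * g⁻¹ : SpecialLinearGroup n R) : Matrix n n R) = trace (A : Matrix n n R) := by
  rw [coe_mul, trace_mul_comm, ← coe_mul, inv_mul_cancel_left]

theorem Matrix.SpecialLinearGroup.det_fin_two_eq_one {R : Type*} [CommRing R] (A : SL(2, R)) :
    A 0 0 * A 1 1 - A 0 1 * A 1 0 = 1 := by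
  have h := A.det_coe
  rwa [det_fin_two] at h

theorem ModularGroup.coe_S_conj (A : SL(2, ℤ)) :
    ((S * A * S⁻¹ : SL(2, ℤ)) : Matrix (Fin 2) (Fin 2) ℤ) = !![A 1 1, -A 1 0; -A 0 1, A 0 0] := by
  rw [coe_mul, coe_mul, coe_inv, coe_S, adjugate_fin_two_of,
    eta_fin_two (A : Matrix (Fin 2) (Fin 2) ℤ)]
  simp

theorem ModularGroup.coe_T_zpow_conj (n : ℤ) (A : SL(2, ℤ)) :
    ((T ^ n * A * (T ^ n)⁻¹ : SL(2, ℤ)) : Matrix (Fin 2) (Fin 2) ℤ) =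
      !![A 0 0 + n * A 1 0, A 0 1 + n * A 1 1 - n * (A 0 0 + n * A 1 0);
         A 1 0, A 1 1 - n * A 1 0] := by
  rw [coe_mul, coe_mul, coe_inv, coe_T_zpow, adjugate_fin_two_of,
    eta_fin_two (A : Matrix (Fin 2) (Fin 2) ℤ)]
  ext i j
  fin_cases i <;> fin_cases j <;> simp <;> ring

theorem lower_left_ne_zero_of_two_lt_trace {A : SL(2, ℤ)}
    (hA : 2 < trace (A : Matrix (Fin 2) (Fin 2) ℤ)) : A 1 0 ≠ 0 := by
  intro hc
  have had : A 0 0 * A 1 1 = 1 := by simpa [hc] using det_fin_two_eq_one A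
  rw [trace_fin_two] at hA
  rcases Int.eq_one_or_neg_one_of_mul_eq_one' had with ⟨ha, hd⟩ | ⟨ha, hd⟩ <;> omega

theorem Int.exists_one_le_sub_mul_le_abs (d : ℤ) {c : ℤ} (hc : c ≠ 0) :
    ∃ n : ℤ, 1 ≤ d - n * c ∧ d - n * c ≤ |c| := by
  have hdiv := Int.mul_ediv_add_emod (d - 1) c
  have hlo := Int.emod_nonneg (d - 1) hc
  have hhi := Int.emod_lt_abs (d - 1) hc
  exact ⟨(d - 1) / c, by linarith, by linarith⟩

theorem Int.natAbs_lt_natAbs_of_det_eq_one {a b c d : ℤ} (hdet : a * d - b * c = 1)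
    (htr : 3 ≤ a + d) (hd : 1 ≤ d) (hdc : d ≤ |c|) (hbc : b * c < 0) :
    b.natAbs < c.natAbs := by
  have ha : a ≤ 0 := by nlinarith
  have hprod : |b| * |c| = 1 + -a * d := by rw [← abs_mul, abs_of_neg hbc]; linarith
  have hlt : |b| * |c| < |c| * |c| := by nlinarith
  zify
  exact lt_of_mul_lt_mul_right hlt (abs_nonneg c)

theorem hasNonnegConj_of_nonneg_diag {A : SL(2, ℤ)} (ha : 0 ≤ A 0 0) (hd : 0 ≤ A 1 1)
    (hbc : 0 ≤ A 0 1 * A 1 0) : HasNonnegConj A := by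
  rcases mul_nonneg_iff.mp hbc with ⟨hb, hc⟩ | ⟨hb, hc⟩
  · refine ⟨1, fun i j => ?_⟩
    fin_cases i <;> fin_cases j <;> simpa
  · refine ⟨S, fun i j => ?_⟩
    rw [coe_S_conj]
    fin_cases i <;> fin_cases j <;> simp <;> linarith

theorem hasNonnegConj_or_exists_conj_natAbs_lt {A : SL(2, ℤ)}
    (hA : 2 < trace (A : Matrix (Fin 2) (Fin 2) ℤ)) :
    HasNonnegConj A ∨ ∃ g : SL(2, ℤ), ((g * A * g⁻¹ : SL(2, ℤ)) 1 0).natAbs < (A 1 0).natAbs := by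
  obtain ⟨k, hk1, hk2⟩ :=
    Int.exists_one_le_sub_mul_le_abs (A 1 1) (lower_left_ne_zero_of_two_lt_trace hA)
  set B := T ^ k * A * (T ^ k)⁻¹
  have hB := coe_T_zpow_conj k A
  have hB00 : B 0 0 = A 0 0 + k * A 1 0 := by rw [hB]; rfl
  have hB10 : B 1 0 = A 1 0 := by rw [hB]; rfl
  have hB11 : B 1 1 = A 1 1 - k * A 1 0 := by rw [hB]; rfl
  have hdet := det_fin_two_eq_one B
  rw [trace_fin_two] at hA
  by_cases hbc : 0 ≤ B 0 1 * B 1 0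
  · exact .inl <| .of_conj (T ^ k) <|
      hasNonnegConj_of_nonneg_diag (by nlinarith) (by linarith) hbc
  · refine .inr ⟨S * T ^ k, ?_⟩
    have hSB : S * T ^ k * A * (S * T ^ k)⁻¹ = S * B * S⁻¹ := by simp only [B]; group
    rw [hSB, coe_S_conj, ← hB10]
    simpa using Int.natAbs_lt_natAbs_of_det_eq_one hdet (by linarith) (by linarith)
      (by rwa [hB10, hB11]) (not_le.mp hbc)

/-- Every matrix `A ∈ SL(2,ℤ)` with trace `> 2` is conjugate in `SL(2,ℤ)`
to a matrix all of whose entries are nonnegative. -/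
theorem hyperbolic_conj_nonneg (A : Matrix.SpecialLinearGroup (Fin 2) ℤ)
    (hA : 2 < Matrix.trace (A : Matrix (Fin 2) (Fin 2) ℤ)) :
    ∃ T : Matrix.SpecialLinearGroup (Fin 2) ℤ,
      ∀ i j, 0 ≤ ((T * A * T⁻¹ : Matrix.SpecialLinearGroup (Fin 2) ℤ) :
        Matrix (Fin 2) (Fin 2) ℤ) i j := by
  change HasNonnegConj A
  induction hn : (A 1 0).natAbs using Nat.strong_induction_on generalizing A with
  | _ n ih =>
  rcases hasNonnegConj_or_exists_conj_natAbs_lt hA with hA' | ⟨g, hlt⟩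
  · exact hA'
  · exact .of_conj g (ih _ (hn ▸ hlt) _ (by rwa [trace_coe_conj]) rfl)
end

section
/- Let A = [[5,2],[2,1]] and B = [[5,1],[4,1]], both elements of SL(2,ℤ). Then A and B have the same characteristic polynomial X² − 6X + 1, but A and B are not conjugate in SL(2,ℤ): there is no T ∈ SL(2,ℤ) with T·A·T⁻¹ = B. -/
open Polynomial

lemma charpoly_fin_two' (M : Matrix (Fin 2) (Fin 2) ℤ) :
    M.charpoly = (X - C (M 0 0)) * (X - C (M 1 1)) - C (M 0 1) * C (M 1 0) := by
  simp [Matrix.charpoly, Matrix.det_fin_two, Matrix.charmatrix_apply]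

/-- The matrices `A = [[5,2],[2,1]]` and `B = [[5,1],[4,1]]` in `SL(2,ℤ)`
have the same characteristic polynomial `X² - 6X + 1`, but are not conjugate in
`SL(2,ℤ)`. -/
theorem not_conjugate_same_charpoly
    (A B : Matrix.SpecialLinearGroup (Fin 2) ℤ)
    (hA : (A : Matrix (Fin 2) (Fin 2) ℤ) = !![5, 2; 2, 1])
    (hB : (B : Matrix (Fin 2) (Fin 2) ℤ) = !![5, 1; 4, 1]) :
    (A : Matrix (Fin 2) (Fin 2) ℤ).charpoly = X ^ 2 - 6 * X + 1 ∧
    (B : Matrix (Fin 2) (Fin 2) ℤ).charpoly = X ^ 2 - 6 * X + 1 ∧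
    ¬∃ T : Matrix.SpecialLinearGroup (Fin 2) ℤ, T * A * T⁻¹ = B := by
  refine ⟨?_, ?_, ?_⟩
  · rw [hA, charpoly_fin_two']
    simp [Matrix.cons_val_zero, Matrix.cons_val_one]
    ring
  · rw [hB, charpoly_fin_two']
    simp [Matrix.cons_val_zero, Matrix.cons_val_one]
    ring
  · rintro ⟨T, hT⟩
    have h : T * A = B * T := by
      have := congrArg (· * T) hT
      simpa [mul_assoc] using this
    have hm : (T : Matrix (Fin 2) (Fin 2) ℤ) * (A : Matrix (Fin 2) (Fin 2) ℤ)
        = (B : Matrix (Fin 2) (Fin 2) ℤ) * (T : Matrix (Fin 2) (Fin 2) ℤ) := by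
      have := congrArg (fun M : Matrix.SpecialLinearGroup (Fin 2) ℤ =>
        (M : Matrix (Fin 2) (Fin 2) ℤ)) h
      simpa using this
    rw [hA, hB] at hm
    have hdet : (T : Matrix (Fin 2) (Fin 2) ℤ).det = 1 := T.2
    rw [Matrix.det_fin_two] at hdet
    have e00 := congrFun (congrFun hm 0) 0
    have e01 := congrFun (congrFun hm 0) 1
    have e10 := congrFun (congrFun hm 1) 0
    have e11 := congrFun (congrFun hm 1) 1
    simp [Matrix.mul_apply, Fin.sum_univ_two] at e00 e01 e10 e11
    set a := (T : Matrix (Fin 2) (Fin 2) ℤ) 0 0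
    set b := (T : Matrix (Fin 2) (Fin 2) ℤ) 0 1
    set c := (T : Matrix (Fin 2) (Fin 2) ℤ) 1 0
    set d := (T : Matrix (Fin 2) (Fin 2) ℤ) 1 1
    have hc : c = 2 * b := by omega
    have hd : d = 2 * a - 4 * b := by omega
    rw [hc, hd] at hdet
    have key : (1 : ℤ) = 2 * (a * a - 2 * a * b - b * b) := by linear_combination -hdet
    omega
end

section
/- In the real quadratic field K = ℚ(√2), the full modules m_A = ℤ + ℤ(√2 − 1) and m_B = ℤ + ℤ(2√2 − 2) are not similar: there is no nonzero α ∈ ℚ(√2) such that α·m_A = m_B. -/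
/-!
`m_A = ℤ + ℤ(√2 - 1)` is the ring `ℤ[√2]`, so it is stable under multiplication by `√2`, and
stability under a fixed multiplier is preserved by similarity `m ↦ α·m`. But `m_B = ℤ + 2ℤ√2`
contains `1` and not `√2`, because `1, √2` are linearly independent over `ℤ`.
-/

theorem forall_mul_mem_image_mul_left {M : Type*} [CommSemigroup M] {S : Set M} {s : M}
    (hS : ∀ x ∈ S, s * x ∈ S) (α : M) : ∀ y ∈ (α * ·) '' S, s * y ∈ (α * ·) '' S := by
  rintro _ ⟨x, hx, rfl⟩
  exact ⟨s * x, hS x hx, mul_left_comm α s x⟩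

section IntSpan

variable {K : Type*}

def intSpanOneAnd [Ring K] (θ : K) : Set K :=
  {x | ∃ a b : ℤ, x = a + b * θ}

theorem one_mem_intSpanOneAnd [Ring K] (θ : K) : 1 ∈ intSpanOneAnd θ :=
  ⟨1, 0, by simp⟩

theorem mul_mem_intSpanOneAnd_sub_one [CommRing K] {s x : K} (hs : s ^ 2 = 2)
    (hx : x ∈ intSpanOneAnd (s - 1)) : s * x ∈ intSpanOneAnd (s - 1) := by
  obtain ⟨a, b, rfl⟩ := hx
  exact ⟨a + b, a - b, by push_cast; linear_combination b * hs⟩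

theorem ratCast_ne_of_sq_eq_two [Field K] [CharZero K] {s : K} (hs : s ^ 2 = 2) (r : ℚ) :
    (r : K) ≠ s := by
  rintro rfl
  have hr : r ^ 2 = 2 := by exact_mod_cast hs
  have h2 : ¬IsSquare (2 : ℚ) := by
    simpa using (irrational_sqrt_ratCast_iff (q := 2)).mp (by simpa using irrational_sqrt_two)
  exact h2 ⟨r, by rw [← hr, sq]⟩

theorem eq_zero_of_intCast_add_mul_eq_zero [Field K] [CharZero K] {s : K} (hs : s ^ 2 = 2)
    {p q : ℤ} (h : (p : K) + q * s = 0) : q = 0 := by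
  by_contra hq
  have hqK : (q : K) ≠ 0 := Int.cast_ne_zero.mpr hq
  refine ratCast_ne_of_sq_eq_two hs (-p / q) ?_
  push_cast
  field_simp
  linear_combination -h

theorem notMem_intSpanOneAnd_two_mul_sub_two [Field K] [CharZero K] {s : K} (hs : s ^ 2 = 2) :
    s ∉ intSpanOneAnd (2 * s - 2) := by
  rintro ⟨a, b, hab⟩
  have h := eq_zero_of_intCast_add_mul_eq_zero hs (p := a - 2 * b) (q := 2 * b - 1)
    (by push_cast; linear_combination -hab)
  omega

end IntSpan

theorem modules_mA_mB_not_similar_general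
    (K : Type*) [Field K] [Algebra ℚ K]
    (sq2 : K) (hsq2 : sq2 ^ 2 = 2)
    (mA mB : Set K)
    (hmA : mA = {x : K | ∃ a b : ℤ, x = (a : K) + (b : K) * (sq2 - 1)})
    (hmB : mB = {x : K | ∃ a b : ℤ, x = (a : K) + (b : K) * (2 * sq2 - 2)}) :
    ¬∃ α : K, α ≠ 0 ∧ (fun x => α * x) '' mA = mB := by
  rintro ⟨α, -, hsim⟩
  have : CharZero K := charZero_of_injective_algebraMap (algebraMap ℚ K).injective
  have hmB_stable : ∀ y ∈ mB, sq2 * y ∈ mB := by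
    rw [← hsim, hmA]
    exact forall_mul_mem_image_mul_left (fun _ => mul_mem_intSpanOneAnd_sub_one hsq2) α
  have hsq2_mem : sq2 * 1 ∈ mB := hmB_stable 1 (hmB ▸ one_mem_intSpanOneAnd _)
  rw [mul_one, hmB] at hsq2_mem
  exact notMem_intSpanOneAnd_two_mul_sub_two hsq2 hsq2_mem

/-- In `K = ℚ(√2)`, the full modules `m_A = ℤ + ℤ(√2 - 1)` and
`m_B = ℤ + ℤ(2√2 - 2)` are not similar: there is no nonzero `α ∈ K` with `α·m_A = m_B`. -/
theorem modules_mA_mB_not_similar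
    (K : Type*) [Field K] [Algebra ℚ K] (hdim : Module.finrank ℚ K = 2)
    (sq2 : K) (hsq2 : sq2 ^ 2 = 2)
    (mA mB : Set K)
    (hmA : mA = {x : K | ∃ a b : ℤ, x = (a : K) + (b : K) * (sq2 - 1)})
    (hmB : mB = {x : K | ∃ a b : ℤ, x = (a : K) + (b : K) * (2 * sq2 - 2)}) :
    ¬∃ α : K, α ≠ 0 ∧ (fun x => α * x) '' mA = mB :=
  modules_mA_mB_not_similar_general K sq2 hsq2 mA mB hmA hmB
end
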